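/- Let 0 < r < R, let k ≥ 1 be a natural number, and let θ > 0 satisfy θ·(R − r) < 1. Then there exists X > 0 such that for every λ ∈ ℂ and every m ∈ ℕ with |λ| ≥ X and |Im λ| + m ≤ θ·ln(2 + |λ|), one has B(R, λ, k−1, m) · (|λ| + 1)^{k−1} · e^{R·|Im λ|} ≤ B(r, λ, k, m) · (|λ| + 1)^k · e^{r·|Im λ|}. -/

import Mathlib

open Complex Filter

/-- The weight `B(R, λ, q, m)` from the paper (it depends only on `R`, `q`, `m`). -/
noncomputable def Bwt (R : ℝ) (_lam : ℂ) (q m : ℕ) : ℝ :=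
  if R > 1 then R ^ m
  else if R = 1 then (m : ℝ) + 1
  else min ((q : ℝ) + 1) ((m : ℝ) + 1)

/-!
Passing from `(k, r)` to `(k - 1, R)` costs at most a factor `(m + 1) e^{(R - r) m}` in the
weight `B` and a factor `e^{(R - r) |Im λ|}` in the exponential, while one power of `|λ| + 1`
is gained. Under the growth condition these costs are at most
`(1 + θ log (2 + |λ|)) (2 + |λ|)^{θ (R - r)}`, which is `o(|λ|)` because `θ (R - r) < 1`.
-/

open Asymptotics

section Weight

variable (R : ℝ) (lam : ℂ) (q m : ℕ)

lemma one_le_Bwt : 1 ≤ Bwt R lam q m := by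
  have hq : (0 : ℝ) ≤ q := q.cast_nonneg
  have hm : (0 : ℝ) ≤ m := m.cast_nonneg
  unfold Bwt
  split_ifs with h1
  · exact one_le_pow₀ h1.le
  · linarith
  · exact le_min (by linarith) (by linarith)

lemma max_one_pow_le_Bwt : max R 1 ^ m ≤ Bwt R lam q m := by
  rcases lt_or_ge 1 R with hR | hR
  · simp [Bwt, hR, hR.le]
  · simpa [max_eq_right hR] using one_le_Bwt R lam q m

lemma Bwt_le_of_le_one (hR : R ≤ 1) : Bwt R lam q m ≤ m + 1 := by
  unfold Bwt
  split_ifs with h1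
  · exact absurd h1 (not_lt.2 hR)
  · rfl
  · exact min_le_right _ _

end Weight

lemma le_max_one_mul_exp_sub {r R : ℝ} (hrR : r ≤ R) : R ≤ max r 1 * Real.exp (R - r) := by
  have hexp := Real.add_one_le_exp (R - r)
  rcases le_total 1 r with hr | hr
  · rw [max_eq_left hr]
    nlinarith
  · rw [max_eq_right hr]
    linarith

lemma Bwt_le_mul_exp_mul_Bwt {r R : ℝ} (hrR : r ≤ R) (lam lam' : ℂ) (q q' m : ℕ) :
    Bwt R lam q m ≤ (m + 1) * Real.exp ((R - r) * m) * Bwt r lam' q' m := by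
  have hBr := one_le_Bwt r lam' q' m
  have hexp : 1 ≤ Real.exp ((R - r) * m) :=
    Real.one_le_exp (mul_nonneg (sub_nonneg.2 hrR) m.cast_nonneg)
  have hm : (1 : ℝ) ≤ m + 1 := by linarith [m.cast_nonneg (α := ℝ)]
  rcases le_or_gt R 1 with hR | hR
  · calc Bwt R lam q m ≤ (m + 1) * 1 * 1 := by simpa using Bwt_le_of_le_one R lam q m hR
      _ ≤ (m + 1) * Real.exp ((R - r) * m) * Bwt r lam' q' m := by gcongr
  · calc Bwt R lam q m = R ^ m := if_pos hR
      _ ≤ (max r 1 * Real.exp (R - r)) ^ m :=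
        pow_le_pow_left₀ (by linarith) (le_max_one_mul_exp_sub hrR) m
      _ = Real.exp ((R - r) * m) * max r 1 ^ m := by
        rw [mul_pow, ← Real.exp_nat_mul, mul_comm (m : ℝ), mul_comm]
      _ ≤ 1 * Real.exp ((R - r) * m) * Bwt r lam' q' m := by
        rw [one_mul]
        gcongr
        exact max_one_pow_le_Bwt r lam' q' m
      _ ≤ (m + 1) * Real.exp ((R - r) * m) * Bwt r lam' q' m := by gcongr

lemma isLittleO_one_add_mul_log_mul_rpow {c : ℝ} (hc : c < 1) (θ : ℝ) :
    (fun x => (1 + θ * Real.log x) * x ^ c) =o[atTop] id := by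
  have hc' : 0 < 1 - c := by linarith
  have hone : (fun _ => (1 : ℝ)) =o[atTop] fun x => x ^ (1 - c) :=
    (isLittleO_one_left_iff ℝ).2 <| (tendsto_rpow_atTop hc').congr' <| by
      filter_upwards [eventually_ge_atTop 0] with x hx
      rw [Real.norm_of_nonneg (Real.rpow_nonneg hx _)]
  have hlog := (hone.add ((isLittleO_log_rpow_atTop hc').const_mul_left θ)).mul_isBigO
    (isBigO_refl (fun x : ℝ => x ^ c) atTop)
  refine hlog.trans_eventuallyEq ?_
  filter_upwards [eventually_gt_atTop 0] with x hx
  rw [← Real.rpow_add hx, sub_add_cancel, Real.rpow_one, id]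

lemma exists_mul_exp_le_of_le_mul_log {r R θ : ℝ} (hrR : r ≤ R) (hθ : 0 ≤ θ)
    (hθR : θ * (R - r) < 1) :
    ∃ X, ∀ a ≥ X, ∀ (t : ℝ) (m : ℕ), 0 ≤ t → t + m ≤ θ * Real.log (2 + a) →
      (m + 1) * Real.exp ((R - r) * (m + t)) ≤ a + 1 := by
  obtain ⟨X₀, hX₀⟩ := eventually_atTop.1
    ((isLittleO_one_add_mul_log_mul_rpow hθR θ).bound (by norm_num : (0 : ℝ) < 1 / 2))
  refine ⟨max X₀ 0, fun a ha t m ht hgrowth => ?_⟩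
  have ha₀ : 0 ≤ a := le_of_max_le_right ha
  have hlog : 0 ≤ Real.log (2 + a) := Real.log_nonneg (by linarith)
  calc (m + 1) * Real.exp ((R - r) * (m + t))
      ≤ (1 + θ * Real.log (2 + a)) * (2 + a) ^ (θ * (R - r)) := by
        rw [Real.rpow_def_of_pos (by linarith)]
        refine mul_le_mul (by linarith) (Real.exp_le_exp.2 ?_) (by positivity) (by positivity)
        nlinarith [mul_le_mul_of_nonneg_left hgrowth (sub_nonneg.2 hrR)]
    _ ≤ 1 / 2 * (2 + a) := by
      have h := hX₀ (2 + a) (by linarith [le_of_max_le_left ha])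
      rwa [Real.norm_of_nonneg (by positivity), id, Real.norm_of_nonneg (by linarith)] at h
    _ ≤ a + 1 := by linarith

theorem pointwise_weight_comparison_general (r R : ℝ) (hrR : r < R)
    (k : ℕ) (hk : 1 ≤ k) (θ : ℝ) (hθ : 0 < θ) (hθR : θ * (R - r) < 1) :
    ∃ X > (0 : ℝ), ∀ (lam : ℂ) (m : ℕ), X ≤ ‖lam‖ →
      |lam.im| + (m : ℝ) ≤ θ * Real.log (2 + ‖lam‖) →
      Bwt R lam (k - 1) m * (‖lam‖ + 1) ^ (k - 1) * Real.exp (R * |lam.im|) ≤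
      Bwt r lam k m * (‖lam‖ + 1) ^ k * Real.exp (r * |lam.im|) := by
  obtain ⟨X, hX⟩ := exists_mul_exp_le_of_le_mul_log hrR.le hθ.le hθR
  refine ⟨max X 1, by positivity, fun lam m hlam hgrowth => ?_⟩
  set a := ‖lam‖
  have hcost := hX a (le_of_max_le_left hlam) |lam.im| m (abs_nonneg _) hgrowth
  have hB := one_le_Bwt r lam k m
  calc Bwt R lam (k - 1) m * (a + 1) ^ (k - 1) * Real.exp (R * |lam.im|)
      ≤ (m + 1) * Real.exp ((R - r) * m) * Bwt r lam k m * (a + 1) ^ (k - 1)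
          * Real.exp (R * |lam.im|) := by
        gcongr
        exact Bwt_le_mul_exp_mul_Bwt hrR.le lam lam (k - 1) k m
    _ = Bwt r lam k m * (a + 1) ^ (k - 1) * Real.exp (r * |lam.im|)
          * ((m + 1) * Real.exp ((R - r) * (m + |lam.im|))) := by
        rw [show R * |lam.im| = r * |lam.im| + (R - r) * |lam.im| by ring, mul_add,
          Real.exp_add, Real.exp_add]
        ring
    _ ≤ Bwt r lam k m * (a + 1) ^ (k - 1) * Real.exp (r * |lam.im|) * (a + 1) := by gcongr
    _ = Bwt r lam k m * (a + 1) ^ k * Real.exp (r * |lam.im|) := by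
        rw [mul_right_comm _ _ (a + 1), mul_assoc _ _ (a + 1), ← pow_succ, Nat.sub_add_cancel hk]

theorem pointwise_weight_comparison (r R : ℝ) (hr : 0 < r) (hrR : r < R)
    (k : ℕ) (hk : 1 ≤ k) (θ : ℝ) (hθ : 0 < θ) (hθR : θ * (R - r) < 1) :
    ∃ X > (0 : ℝ), ∀ (lam : ℂ) (m : ℕ), X ≤ ‖lam‖ →
      |lam.im| + (m : ℝ) ≤ θ * Real.log (2 + ‖lam‖) →
      Bwt R lam (k - 1) m * (‖lam‖ + 1) ^ (k - 1) * Real.exp (R * |lam.im|) ≤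
      Bwt r lam k m * (‖lam‖ + 1) ^ k * Real.exp (r * |lam.im|) :=
  pointwise_weight_comparison_general r R hrR k hk θ hθ hθR
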